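/- arXiv:math/0603109 — 3 statements merged into one kernel-verified Lean document; each statement's English description precedes it below -/
import Mathlib

section
/- For all integers κ ≥ θ ≥ 2, the function λ ↦ p_c^MF(κ,θ,λ) is strictly decreasing on the interval [λ_c^MF(κ,θ), ∞), and p_c^MF(κ,θ,λ) → 0 as λ → ∞. -/
open Filter

/-- Bin(κ,x,θ) = ∑_{i=θ}^{κ} (κ choose i) x^i (1−x)^{κ−i}. -/
noncomputable def binTail (κ : ℕ) (x : ℝ) (θ : ℕ) : ℝ :=
  ∑ i ∈ Finset.Icc θ κ, (κ.choose i : ℝ) * x ^ i * (1 - x) ^ (κ - i)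

/-- H(κ,θ,λ;x) = −1 + λ·((1−x)/x)·Bin(κ,x,θ). -/
noncomputable def Hmf (κ θ : ℕ) (lam x : ℝ) : ℝ :=
  -1 + lam * ((1 - x) / x) * binTail κ x θ

/-- λ_c^MF(κ,θ) = sup{λ ≥ 0 : sup_{x∈(0,1]} H(κ,θ,λ;x) < 0}. -/
noncomputable def lambdaMF (κ θ : ℕ) : ℝ :=
  sSup {lam : ℝ | 0 ≤ lam ∧ sSup ((fun x => Hmf κ θ lam x) '' Set.Ioc 0 1) < 0}

/-- p_c^MF(κ,θ,λ) = inf{x ∈ (0,1] : H(κ,θ,λ;x) ≥ 0}. -/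
noncomputable def pcMF (κ θ : ℕ) (lam : ℝ) : ℝ :=
  sInf {x ∈ Set.Ioc (0:ℝ) 1 | 0 ≤ Hmf κ θ lam x}

/-! ### Auxiliary definitions -/

/-- Q(x) = (1-x)·Bin(κ,x,θ), a polynomial, so that H = -1 + λ·Q(x)/x. -/
noncomputable def Qp (κ θ : ℕ) (x : ℝ) : ℝ := (1 - x) * binTail κ x θ

/-- Sum of the binomial coefficients appearing in Bin. -/
noncomputable def Cb (κ θ : ℕ) : ℝ := ∑ i ∈ Finset.Icc θ κ, (κ.choose i : ℝ)

lemma Qp_cont (κ θ : ℕ) : Continuous (Qp κ θ) := by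
  unfold Qp binTail
  exact (continuous_const.sub continuous_id).mul
    (continuous_finset_sum _ fun i _ =>
      ((continuous_const.mul (continuous_pow i)).mul
        ((continuous_const.sub continuous_id).pow _)))

lemma binTail_nonneg (κ θ : ℕ) {x : ℝ} (h0 : 0 ≤ x) (h1 : x ≤ 1) : 0 ≤ binTail κ x θ := by
  have h2 : (0:ℝ) ≤ 1 - x := by linarith
  exact Finset.sum_nonneg fun i _ => by positivity

lemma Qp_nonneg (κ θ : ℕ) {x : ℝ} (h0 : 0 ≤ x) (h1 : x ≤ 1) : 0 ≤ Qp κ θ x :=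
  mul_nonneg (by linarith) (binTail_nonneg κ θ h0 h1)

lemma Cb_pos {κ θ : ℕ} (hκθ : θ ≤ κ) : 0 < Cb κ θ := by
  have hmem : θ ∈ Finset.Icc θ κ := Finset.mem_Icc.mpr ⟨le_refl θ, hκθ⟩
  have h1 : (κ.choose θ : ℝ) ≤ Cb κ θ :=
    Finset.single_le_sum (f := fun i => (κ.choose i : ℝ)) (fun i _ => by positivity) hmem
  have h2 : 0 < (κ.choose θ : ℝ) := by
    exact_mod_cast Nat.choose_pos hκθ
  linarith

lemma Qp_pos {κ θ : ℕ} (hκθ : θ ≤ κ) {x : ℝ} (h0 : 0 < x) (h1 : x < 1) : 0 < Qp κ θ x := by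
  have hbt : 0 < binTail κ x θ := by
    have hmem : θ ∈ Finset.Icc θ κ := Finset.mem_Icc.mpr ⟨le_refl θ, hκθ⟩
    have hterm : 0 < (κ.choose θ : ℝ) * x ^ θ * (1 - x) ^ (κ - θ) := by
      have hc : 0 < (κ.choose θ : ℝ) := by exact_mod_cast Nat.choose_pos hκθ
      have h2 : (0:ℝ) < 1 - x := by linarith
      positivity
    have hle : (κ.choose θ : ℝ) * x ^ θ * (1 - x) ^ (κ - θ) ≤ binTail κ x θ := by
      refine Finset.single_le_sum
        (f := fun i => (κ.choose i : ℝ) * x ^ i * (1 - x) ^ (κ - i)) (fun i _ => ?_) hmem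
      have h2 : (0:ℝ) ≤ 1 - x := by linarith
      positivity
    linarith
  exact mul_pos (by linarith) hbt

lemma Qp_le {κ θ : ℕ} (hθ : 2 ≤ θ) {x : ℝ} (h0 : 0 ≤ x) (h1 : x ≤ 1) :
    Qp κ θ x ≤ Cb κ θ * x ^ 2 := by
  have h2 : (0:ℝ) ≤ 1 - x := by linarith
  have hb : binTail κ x θ ≤ Cb κ θ * x ^ 2 := by
    unfold binTail Cb
    rw [Finset.sum_mul]
    refine Finset.sum_le_sum fun i hi => ?_
    have hθi : θ ≤ i := (Finset.mem_Icc.mp hi).1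
    have hxi : x ^ i ≤ x ^ 2 := pow_le_pow_of_le_one h0 h1 (le_trans hθ hθi)
    have hpow : (1 - x) ^ (κ - i) ≤ 1 := pow_le_one₀ h2 (by linarith)
    have hc : (0:ℝ) ≤ (κ.choose i : ℝ) := by positivity
    calc (κ.choose i : ℝ) * x ^ i * (1 - x) ^ (κ - i)
        ≤ (κ.choose i : ℝ) * x ^ i * 1 := by
          apply mul_le_mul_of_nonneg_left hpow; positivity
      _ = (κ.choose i : ℝ) * x ^ i := by ring
      _ ≤ (κ.choose i : ℝ) * x ^ 2 := mul_le_mul_of_nonneg_left hxi hc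
  have hbn : 0 ≤ binTail κ x θ := binTail_nonneg κ θ h0 h1
  calc Qp κ θ x = (1 - x) * binTail κ x θ := rfl
    _ ≤ 1 * binTail κ x θ := mul_le_mul_of_nonneg_right (by linarith) hbn
    _ = binTail κ x θ := one_mul _
    _ ≤ Cb κ θ * x ^ 2 := hb

lemma Hmf_eq (κ θ : ℕ) (lam x : ℝ) (hx : x ≠ 0) :
    Hmf κ θ lam x = lam * (Qp κ θ x / x) - 1 := by
  unfold Hmf Qp
  field_simp
  ring

lemma Hmf_nonneg_iff (κ θ : ℕ) (lam x : ℝ) (hx : 0 < x) :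
    0 ≤ Hmf κ θ lam x ↔ x ≤ lam * Qp κ θ x := by
  rw [Hmf_eq κ θ lam x hx.ne', sub_nonneg, mul_div_assoc', le_div_iff₀ hx, one_mul]

lemma exists_max (κ θ : ℕ) (hθ : 2 ≤ θ) (hκθ : θ ≤ κ) :
    ∃ x0 ∈ Set.Ioo (0:ℝ) 1, ∀ x ∈ Set.Ioc (0:ℝ) 1,
      Qp κ θ x / x ≤ Qp κ θ x0 / x0 := by
  set G : ℝ → ℝ := fun x => if x = 0 then 0 else Qp κ θ x / x with hGdef
  have hQ : Continuous (Qp κ θ) := Qp_cont κ θ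
  have hGb : ∀ y ∈ Set.Icc (0:ℝ) 1, 0 ≤ G y ∧ G y ≤ Cb κ θ * y := by
    intro y hy
    rcases eq_or_ne y 0 with rfl | hy0
    · simp [hGdef]
    · have hy0' : 0 < y := lt_of_le_of_ne hy.1 (Ne.symm hy0)
      have h1 : G y = Qp κ θ y / y := by simp [hGdef, hy0]
      constructor
      · rw [h1]; exact div_nonneg (Qp_nonneg κ θ hy.1 hy.2) hy.1
      · rw [h1, div_le_iff₀ hy0']
        have := Qp_le (κ := κ) hθ hy.1 hy.2
        nlinarith
  have hGcont : ContinuousOn G (Set.Icc 0 1) := by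
    intro x hx
    rcases eq_or_ne x 0 with rfl | hx0
    · have hG0 : G 0 = 0 := by simp [hGdef]
      unfold ContinuousWithinAt
      rw [hG0]
      apply squeeze_zero' (g := fun y => Cb κ θ * y)
      · filter_upwards [self_mem_nhdsWithin] with y hy using (hGb y hy).1
      · filter_upwards [self_mem_nhdsWithin] with y hy using (hGb y hy).2
      · have h2 : ContinuousWithinAt (fun y => Cb κ θ * y) (Set.Icc (0:ℝ) 1) 0 :=
          ((continuous_const.mul continuous_id).continuousWithinAt)
        simpa [ContinuousWithinAt] using h2
    · have h1 : ContinuousAt (fun y => Qp κ θ y / y) x :=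
        (hQ.continuousAt).div continuousAt_id hx0
      have h2 : (fun y => Qp κ θ y / y) =ᶠ[nhds x] G := by
        filter_upwards [eventually_ne_nhds hx0] with y hy
        simp [hGdef, hy]
      exact (h1.congr h2).continuousWithinAt
  obtain ⟨x0, hx0, hmax⟩ := isCompact_Icc.exists_isMaxOn
    (Set.nonempty_Icc.mpr zero_le_one) hGcont
  have hhalfmem : (1/2 : ℝ) ∈ Set.Icc (0:ℝ) 1 := by norm_num
  have hGhalf : 0 < G (1/2) := by
    have : G (1/2 : ℝ) = Qp κ θ (1/2) / (1/2) := by norm_num [hGdef]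
    rw [this]
    have := Qp_pos (κ := κ) hκθ (x := (1/2:ℝ)) (by norm_num) (by norm_num)
    positivity
  have hGx0 : 0 < G x0 := lt_of_lt_of_le hGhalf (hmax hhalfmem)
  have hx0ne : x0 ≠ 0 := by
    intro h; rw [h] at hGx0; simp [hGdef] at hGx0
  have hx0ne1 : x0 ≠ 1 := by
    intro h
    rw [h] at hGx0
    have : G (1:ℝ) = 0 := by simp [hGdef, Qp]
    rw [this] at hGx0; exact lt_irrefl 0 hGx0
  have hx0pos : 0 < x0 := lt_of_le_of_ne hx0.1 (Ne.symm hx0ne)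
  have hx0lt1 : x0 < 1 := lt_of_le_of_ne hx0.2 hx0ne1
  refine ⟨x0, ⟨hx0pos, hx0lt1⟩, fun x hx => ?_⟩
  have hxne : x ≠ 0 := hx.1.ne'
  have h1 := hmax (Set.mem_Icc.mpr ⟨hx.1.le, hx.2⟩)
  simpa [hGdef, hxne, hx0ne] using h1

lemma lambdaMF_eq (κ θ : ℕ) (hθ : 2 ≤ θ) (hκθ : θ ≤ κ)
    (x0 : ℝ) (hx0 : x0 ∈ Set.Ioo (0:ℝ) 1)
    (hmax : ∀ x ∈ Set.Ioc (0:ℝ) 1, Qp κ θ x / x ≤ Qp κ θ x0 / x0) :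
    lambdaMF κ θ = 1 / (Qp κ θ x0 / x0) := by
  set M := Qp κ θ x0 / x0 with hMdef
  have hM : 0 < M := div_pos (Qp_pos hκθ hx0.1 hx0.2) hx0.1
  have himg : ∀ lam : ℝ, 0 ≤ lam →
      sSup ((fun x => Hmf κ θ lam x) '' Set.Ioc 0 1) = -1 + lam * M := by
    intro lam hlam
    apply IsGreatest.csSup_eq
    constructor
    · refine ⟨x0, ⟨hx0.1, hx0.2.le⟩, ?_⟩
      show Hmf κ θ lam x0 = -1 + lam * M
      rw [Hmf_eq κ θ lam x0 hx0.1.ne']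
      ring
    · rintro y ⟨x, hx, rfl⟩
      show Hmf κ θ lam x ≤ -1 + lam * M
      rw [Hmf_eq κ θ lam x hx.1.ne']
      have h1 := hmax x hx
      have h2 : lam * (Qp κ θ x / x) ≤ lam * M := mul_le_mul_of_nonneg_left h1 hlam
      linarith
  have hset : {lam : ℝ | 0 ≤ lam ∧
      sSup ((fun x => Hmf κ θ lam x) '' Set.Ioc 0 1) < 0} = Set.Ico 0 (1/M) := by
    ext lam
    simp only [Set.mem_setOf_eq, Set.mem_Ico]
    constructor
    · rintro ⟨h0, h1⟩
      rw [himg lam h0] at h1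
      exact ⟨h0, by rw [lt_div_iff₀ hM]; linarith⟩
    · rintro ⟨h0, h1⟩
      refine ⟨h0, ?_⟩
      rw [himg lam h0]
      rw [lt_div_iff₀ hM] at h1
      linarith
  rw [lambdaMF, hset, csSup_Ico (by positivity)]

lemma pc_mem (κ θ : ℕ) (hθ : 2 ≤ θ) (hκθ : θ ≤ κ) (lam : ℝ) (hlam : 0 < lam)
    (hne : ∃ x ∈ Set.Ioc (0:ℝ) 1, 0 ≤ Hmf κ θ lam x) :
    pcMF κ θ lam ∈ Set.Ioo (0:ℝ) 1 ∧ pcMF κ θ lam ≤ lam * Qp κ θ (pcMF κ θ lam) := by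
  set S := {x ∈ Set.Ioc (0:ℝ) 1 | 0 ≤ Hmf κ θ lam x} with hSdef
  have hCb := Cb_pos hκθ
  set c := 1 / (lam * Cb κ θ) with hcdef
  have hc : 0 < c := by positivity
  have hST : S = Set.Icc c 1 ∩ {x | x ≤ lam * Qp κ θ x} := by
    ext x
    simp only [hSdef, Set.mem_setOf_eq, Set.mem_sep_iff, Set.mem_Ioc, Set.mem_inter_iff,
      Set.mem_Icc]
    constructor
    · rintro ⟨⟨hx0, hx1⟩, hH⟩
      have h2 := (Hmf_nonneg_iff κ θ lam x hx0).mp hH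
      have h3 : Qp κ θ x ≤ Cb κ θ * x ^ 2 := Qp_le hθ hx0.le hx1
      have h5 : 1 ≤ lam * Cb κ θ * x := by nlinarith
      have hcx : c ≤ x := by
        rw [hcdef, div_le_iff₀ (by positivity)]
        nlinarith
      exact ⟨⟨hcx, hx1⟩, h2⟩
    · rintro ⟨⟨hcx, hx1⟩, h2⟩
      have hx0 : 0 < x := lt_of_lt_of_le hc hcx
      exact ⟨⟨hx0, hx1⟩, (Hmf_nonneg_iff κ θ lam x hx0).mpr h2⟩
  have hclosed : IsClosed S := by
    rw [hST]
    exact isClosed_Icc.inter (isClosed_le continuous_id (continuous_const.mul (Qp_cont κ θ)))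
  have hbdd : BddBelow S := ⟨0, fun x hx => hx.1.1.le⟩
  have hpc : pcMF κ θ lam = sInf S := rfl
  have hmem : pcMF κ θ lam ∈ S := by rw [hpc]; exact hclosed.csInf_mem hne hbdd
  obtain ⟨⟨hp0, hp1⟩, hpH⟩ := hmem
  have hple : pcMF κ θ lam ≤ lam * Qp κ θ (pcMF κ θ lam) :=
    (Hmf_nonneg_iff κ θ lam _ hp0).mp hpH
  have hpne1 : pcMF κ θ lam ≠ 1 := by
    intro h
    rw [h] at hple
    have : Qp κ θ (1:ℝ) = 0 := by simp [Qp]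
    rw [this] at hple
    linarith
  exact ⟨⟨hp0, lt_of_le_of_ne hp1 hpne1⟩, hple⟩

theorem stmt3 (κ θ : ℕ) (hθ : 2 ≤ θ) (hκθ : θ ≤ κ) :
    StrictAntiOn (fun lam => pcMF κ θ lam) (Set.Ici (lambdaMF κ θ)) ∧
    Tendsto (fun lam => pcMF κ θ lam) atTop (nhds 0) := by
  obtain ⟨x0, hx0, hmax⟩ := exists_max κ θ hθ hκθ
  set M := Qp κ θ x0 / x0 with hMdef
  have hM : 0 < M := div_pos (Qp_pos hκθ hx0.1 hx0.2) hx0.1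
  have hlc : lambdaMF κ θ = 1 / M := lambdaMF_eq κ θ hθ hκθ x0 hx0 hmax
  -- nonempty for lam ≥ λ_c
  have hne : ∀ lam : ℝ, lambdaMF κ θ ≤ lam →
      ∃ x ∈ Set.Ioc (0:ℝ) 1, 0 ≤ Hmf κ θ lam x := by
    intro lam hlam
    rw [hlc] at hlam
    refine ⟨x0, ⟨hx0.1, hx0.2.le⟩, ?_⟩
    rw [Hmf_nonneg_iff κ θ lam x0 hx0.1]
    have h1 : 1 ≤ lam * M := by
      rw [div_le_iff₀ hM] at hlam; linarith
    have h2 : x0 ≤ lam * M * x0 := by nlinarith [hx0.1]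
    have h3 : M * x0 = Qp κ θ x0 := by
      rw [hMdef, div_mul_cancel₀ _ hx0.1.ne']
    calc x0 ≤ lam * M * x0 := h2
      _ = lam * (M * x0) := by ring
      _ = lam * Qp κ θ x0 := by rw [h3]
  have hlampos : ∀ lam : ℝ, lambdaMF κ θ ≤ lam → 0 < lam := by
    intro lam hlam
    rw [hlc] at hlam
    have : (0:ℝ) < 1 / M := by positivity
    linarith
  constructor
  · -- strict antitonicity
    intro lam1 h1 lam2 h2 hlt
    simp only [Set.mem_Ici] at h1 h2
    obtain ⟨hp1mem, hp1le⟩ := pc_mem κ θ hθ hκθ lam1 (hlampos lam1 h1) (hne lam1 h1)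
    set p1 := pcMF κ θ lam1 with hp1def
    have hQp1 : 0 < Qp κ θ p1 := Qp_pos hκθ hp1mem.1 hp1mem.2
    have hgt : 0 < lam2 * Qp κ θ p1 - p1 := by nlinarith
    -- find a point slightly below p1 in S_{lam2}
    have hcont : Continuous (fun x => lam2 * Qp κ θ x - x) :=
      (continuous_const.mul (Qp_cont κ θ)).sub continuous_id
    have hopen : IsOpen {x : ℝ | 0 < lam2 * Qp κ θ x - x} :=
      isOpen_lt continuous_const hcont
    obtain ⟨ε, hε, hball⟩ := Metric.isOpen_iff.mp hopen p1 hgt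
    set x1 := p1 - min ε p1 / 2 with hx1def
    have hminpos : 0 < min ε p1 := lt_min hε hp1mem.1
    have hx1lt : x1 < p1 := by
      rw [hx1def]; linarith
    have hx1pos : 0 < x1 := by
      have : min ε p1 ≤ p1 := min_le_right _ _
      rw [hx1def]; linarith
    have hx1ball : x1 ∈ Metric.ball p1 ε := by
      rw [Metric.mem_ball, hx1def]
      have : min ε p1 ≤ ε := min_le_left _ _
      rw [Real.dist_eq]
      rw [abs_of_nonpos (by linarith)]
      linarith
    have hx1S : 0 < lam2 * Qp κ θ x1 - x1 := hball hx1ball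
    have hx1mem : x1 ∈ {x ∈ Set.Ioc (0:ℝ) 1 | 0 ≤ Hmf κ θ lam2 x} := by
      refine ⟨⟨hx1pos, ?_⟩, ?_⟩
      · linarith [hp1mem.2]
      · rw [Hmf_nonneg_iff κ θ lam2 x1 hx1pos]; linarith
    have hbdd2 : BddBelow {x ∈ Set.Ioc (0:ℝ) 1 | 0 ≤ Hmf κ θ lam2 x} :=
      ⟨0, fun x hx => hx.1.1.le⟩
    have : pcMF κ θ lam2 ≤ x1 := csInf_le hbdd2 hx1mem
    calc pcMF κ θ lam2 ≤ x1 := this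
      _ < p1 := hx1lt
  · -- tendsto 0
    rw [Metric.tendsto_atTop]
    intro ε hε
    set x1 := min ε 1 / 2 with hx1def
    have hx1pos : 0 < x1 := by
      have := lt_min hε one_pos
      rw [hx1def]; linarith
    have hx1lt1 : x1 < 1 := by
      have : min ε 1 ≤ 1 := min_le_right _ _
      rw [hx1def]; linarith
    have hx1ltε : x1 < ε := by
      have h1 : min ε 1 ≤ ε := min_le_left _ _
      have h2 := lt_min hε one_pos
      rw [hx1def]; linarith
    have hQx1 : 0 < Qp κ θ x1 := Qp_pos hκθ hx1pos hx1lt1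
    refine ⟨x1 / Qp κ θ x1, fun lam hlam => ?_⟩
    have hx1mem : x1 ∈ {x ∈ Set.Ioc (0:ℝ) 1 | 0 ≤ Hmf κ θ lam x} := by
      refine ⟨⟨hx1pos, hx1lt1.le⟩, ?_⟩
      rw [Hmf_nonneg_iff κ θ lam x1 hx1pos]
      rw [ge_iff_le, div_le_iff₀ hQx1] at hlam
      linarith
    have hbdd : BddBelow {x ∈ Set.Ioc (0:ℝ) 1 | 0 ≤ Hmf κ θ lam x} :=
      ⟨0, fun x hx => hx.1.1.le⟩
    have hle : pcMF κ θ lam ≤ x1 := csInf_le hbdd hx1mem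
    have hge : 0 ≤ pcMF κ θ lam :=
      le_csInf ⟨x1, hx1mem⟩ fun b hb => hb.1.1.le
    rw [Real.dist_eq, sub_zero, abs_of_nonneg hge]
    linarith
end

section
/- For every integer θ ≥ 2, the constant Φ_θ satisfies 0 < Φ_θ < ∞ and lim_{κ→∞} κ·λ_c^MF(κ,θ) = Φ_θ, where the limit is taken over integers κ → ∞. -/
open Filter

/-- Poisson(γ,θ) = ∑_{i=θ}^{∞} e^{−γ} γ^i / i!. -/
noncomputable def poissonTail (γ : ℝ) (θ : ℕ) : ℝ :=
  ∑' i : ℕ, Real.exp (-γ) * γ ^ (θ + i) / (θ + i).factorial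

/-- Φ_θ = inf_{γ>0} γ / Poisson(γ,θ). -/
noncomputable def Phi (θ : ℕ) : ℝ :=
  sInf ((fun γ => γ / poissonTail γ θ) '' Set.Ioi 0)

open Set Topology

/-!
Write `λ_c^MF(κ,θ) = 1 / M_κ` with `M_κ = sup_{x ∈ (0,1]} ((1-x)/x) Bin(κ,x,θ)` and
`Φ_θ = 1 / S_θ` with `S_θ = sup_{γ>0} Poisson(γ,θ)/γ`; the claim becomes `M_κ / κ → S_θ`.
At `x = γ/κ` the law of rare events gives `((1-x)/(κx)) Bin(κ,x,θ) → Poisson(γ,θ)/γ`, so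
`liminf M_κ/κ ≥ S_θ`. Conversely `C(κ,i) x^i (1-x)^(κ-i) ≤ e^(-κx) γ^i/i!` with `γ = κx/(1-x)`,
so `Bin(κ,x,θ) ≤ e^(γ-κx) Poisson(γ,θ)` and `((1-x)/x) Bin(κ,x,θ) ≤ κ e^(γ-κx) S_θ`, where
`γ - κx = (κx)²/(κ-κx)` is small as long as `κx` stays bounded; for `κx ≥ b` the trivial bound
`1/x ≤ κ/b` suffices, which for `b = 1/S_θ` is `κ S_θ` as well.
-/

lemma sSup_setOf_sSup_neg_one_add_mul_neg {α : Type*} {f : α → ℝ} {s : Set α} (hs : s.Nonempty)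
    (hbdd : BddAbove (f '' s)) (hpos : 0 < sSup (f '' s)) :
    sSup {lam : ℝ | 0 ≤ lam ∧ sSup ((fun x => -1 + lam * f x) '' s) < 0} = (sSup (f '' s))⁻¹ := by
  have hsup : ∀ lam : ℝ, 0 ≤ lam →
      sSup ((fun x => -1 + lam * f x) '' s) = -1 + lam * sSup (f '' s) := fun lam hlam => by
    rw [Monotone.map_csSup_of_continuousAt (f := fun y => -1 + lam * y) (by fun_prop)
      (fun a b hab => by simp only; gcongr) (hs.image f) hbdd, image_image]
  have hset : {lam : ℝ | 0 ≤ lam ∧ sSup ((fun x => -1 + lam * f x) '' s) < 0}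
      = Ico 0 (sSup (f '' s))⁻¹ := by
    ext lam
    refine and_congr_right fun hlam => ?_
    rw [hsup lam hlam, ← one_div, lt_div_iff₀ hpos]
    constructor <;> intro h <;> linarith
  rw [hset, csSup_Ico (inv_pos.2 hpos)]

lemma hasSum_exp_neg_mul_pow_div_factorial (γ : ℝ) :
    HasSum (fun n : ℕ => Real.exp (-γ) * γ ^ n / n.factorial) 1 := by
  have h := (NormedSpace.expSeries_div_hasSum_exp γ).mul_left (Real.exp (-γ))
  rw [← Real.exp_eq_exp_ℝ, ← Real.exp_add, neg_add_cancel, Real.exp_zero] at h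
  simpa only [mul_div_assoc] using h

lemma poissonTail_eq_one_sub_sum (γ : ℝ) (θ : ℕ) :
    poissonTail γ θ = 1 - ∑ i ∈ Finset.range θ, Real.exp (-γ) * γ ^ i / i.factorial := by
  have hsum := (hasSum_exp_neg_mul_pow_div_factorial γ).summable.sum_add_tsum_nat_add θ
  rw [(hasSum_exp_neg_mul_pow_div_factorial γ).tsum_eq] at hsum
  simp_rw [poissonTail, add_comm θ]
  linarith

lemma poissonTail_pos {γ : ℝ} (hγ : 0 < γ) (θ : ℕ) : 0 < poissonTail γ θ := by
  have hs : Summable fun i : ℕ => Real.exp (-γ) * γ ^ (θ + i) / (θ + i).factorial :=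
    (hasSum_exp_neg_mul_pow_div_factorial γ).summable.comp_injective (add_right_injective θ)
  exact hs.tsum_pos (fun _ => by positivity) 0 (by positivity)

lemma poissonTail_le_self {γ : ℝ} (hγ : 0 ≤ γ) {θ : ℕ} (hθ : 1 ≤ θ) : poissonTail γ θ ≤ γ := by
  have hfirst : Real.exp (-γ) ≤ ∑ i ∈ Finset.range θ, Real.exp (-γ) * γ ^ i / i.factorial := by
    have hterm : ∀ i, 0 ≤ Real.exp (-γ) * γ ^ i / i.factorial := fun i => by positivity
    simpa using Finset.single_le_sum (fun i _ => hterm i) (Finset.mem_range.2 hθ)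
  rw [poissonTail_eq_one_sub_sum]
  linarith [Real.add_one_le_exp (-γ)]

noncomputable def poissonRatioSup (θ : ℕ) : ℝ :=
  sSup ((fun γ => poissonTail γ θ / γ) '' Ioi 0)

lemma bddAbove_poissonTail_div {θ : ℕ} (hθ : 1 ≤ θ) :
    BddAbove ((fun γ => poissonTail γ θ / γ) '' Ioi 0) :=
  ⟨1, forall_mem_image.2 fun _ hγ => div_le_one_of_le₀ (poissonTail_le_self (le_of_lt hγ) hθ)
    (le_of_lt hγ)⟩

lemma poissonTail_div_le_poissonRatioSup {θ : ℕ} (hθ : 1 ≤ θ) {γ : ℝ} (hγ : 0 < γ) :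
    poissonTail γ θ / γ ≤ poissonRatioSup θ :=
  le_csSup (bddAbove_poissonTail_div hθ) (mem_image_of_mem _ hγ)

lemma poissonRatioSup_pos {θ : ℕ} (hθ : 1 ≤ θ) : 0 < poissonRatioSup θ :=
  (div_pos (poissonTail_pos one_pos θ) one_pos).trans_le
    (poissonTail_div_le_poissonRatioSup hθ one_pos)

lemma Phi_eq_inv_poissonRatioSup {θ : ℕ} (hθ : 1 ≤ θ) : Phi θ = (poissonRatioSup θ)⁻¹ := by
  have hpos : ∀ y ∈ (fun γ => poissonTail γ θ / γ) '' Ioi 0, 0 < y :=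
    forall_mem_image.2 fun γ hγ => div_pos (poissonTail_pos hγ θ) hγ
  rw [poissonRatioSup, AntitoneOn.map_csSup_of_continuousWithinAt
    (continuousAt_inv₀ (poissonRatioSup_pos hθ).ne').continuousWithinAt
    (fun a ha b hb hab => inv_anti₀ (hpos a ha) hab) (image_nonempty.2 nonempty_Ioi)
    (bddAbove_poissonTail_div hθ), image_image]
  simp_rw [inv_div]
  rfl

lemma binTail_eq_one_sub_sum {κ θ : ℕ} (h : θ ≤ κ + 1) (x : ℝ) :
    binTail κ x θ = 1 - ∑ i ∈ Finset.range θ, (κ.choose i : ℝ) * x ^ i * (1 - x) ^ (κ - i) := by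
  have htotal : ∑ i ∈ Finset.range (κ + 1), (κ.choose i : ℝ) * x ^ i * (1 - x) ^ (κ - i) = 1 := by
    have hexpand := (add_pow x (1 - x) κ).symm
    rw [add_sub_cancel, one_pow] at hexpand
    exact (Finset.sum_congr rfl fun i _ => by ring).trans hexpand
  rw [← Finset.sum_range_add_sum_Ico _ h] at htotal
  rw [binTail, ← Finset.Ico_add_one_right_eq_Icc]
  linarith

lemma binTail_le_one (κ θ : ℕ) {x : ℝ} (hx0 : 0 ≤ x) (hx1 : x ≤ 1) : binTail κ x θ ≤ 1 := by
  have hterm : ∀ i, 0 ≤ (κ.choose i : ℝ) * x ^ i * (1 - x) ^ (κ - i) := fun i => by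
    have : 0 ≤ 1 - x := by linarith
    positivity
  rcases le_or_gt θ (κ + 1) with h | h
  · rw [binTail_eq_one_sub_sum h]
    linarith [Finset.sum_nonneg fun i (_ : i ∈ Finset.range θ) => hterm i]
  · rw [binTail, Finset.Icc_eq_empty (by omega), Finset.sum_empty]
    exact zero_le_one

lemma binTail_pos {κ θ : ℕ} (h : θ ≤ κ) {x : ℝ} (hx0 : 0 < x) (hx1 : x < 1) :
    0 < binTail κ x θ := by
  have hterm : ∀ i, 0 ≤ (κ.choose i : ℝ) * x ^ i * (1 - x) ^ (κ - i) := fun i => by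
    have : 0 ≤ 1 - x := by linarith
    positivity
  have hθ : 0 < (κ.choose θ : ℝ) * x ^ θ * (1 - x) ^ (κ - θ) := by
    have : 0 < 1 - x := by linarith
    have : 0 < (κ.choose θ : ℝ) := by exact_mod_cast Nat.choose_pos h
    positivity
  exact hθ.trans_le (Finset.single_le_sum (fun i _ => hterm i) (Finset.mem_Icc.2 ⟨le_rfl, h⟩))

lemma tendsto_binTail_poissonTail (γ : ℝ) (θ : ℕ) :
    Tendsto (fun κ : ℕ => binTail κ (γ / κ) θ) atTop (𝓝 (poissonTail γ θ)) := by
  have hmean : Tendsto (fun κ : ℕ => (κ : ℝ) * (γ / κ)) atTop (𝓝 γ) := by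
    refine tendsto_const_nhds.congr' ?_
    filter_upwards [eventually_ne_atTop 0] with κ hκ
    field_simp
  rw [poissonTail_eq_one_sub_sum]
  refine (tendsto_const_nhds.sub (tendsto_finsetSum _ fun i _ =>
    ProbabilityTheory.tendsto_choose_mul_pow_of_tendsto_mul_atTop i hmean)).congr' ?_
  filter_upwards [eventually_ge_atTop θ] with κ hκ
  rw [binTail_eq_one_sub_sum (by omega)]

lemma binTail_le_exp_mul_poissonTail (κ θ : ℕ) {x : ℝ} (hx0 : 0 ≤ x) (hx1 : x < 1) :
    binTail κ x θ ≤
      Real.exp (κ * x / (1 - x) - κ * x) * poissonTail (κ * x / (1 - x)) θ := by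
  set γ := κ * x / (1 - x) with hγ
  have h1x : 0 < 1 - x := by linarith
  have hγ0 : 0 ≤ γ := by positivity
  have hterm : ∀ i ∈ Finset.Icc θ κ, (κ.choose i : ℝ) * x ^ i * (1 - x) ^ (κ - i)
      ≤ Real.exp (-(κ * x)) * (γ ^ i / i.factorial) := by
    intro i hi
    have hpow : (1 - x) ^ κ ≤ Real.exp (-(κ * x)) := by
      calc (1 - x) ^ κ ≤ Real.exp (-x) ^ κ :=
            pow_le_pow_left₀ h1x.le (Real.one_sub_le_exp_neg x) κ
        _ = Real.exp (-(κ * x)) := by rw [← Real.exp_nat_mul]; ring_nf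
    calc (κ.choose i : ℝ) * x ^ i * (1 - x) ^ (κ - i)
        ≤ (κ : ℝ) ^ i / i.factorial * x ^ i * (1 - x) ^ (κ - i) := by
          gcongr
          exact Nat.choose_le_pow_div i κ
      _ = γ ^ i / i.factorial * (1 - x) ^ κ := by
          rw [pow_sub₀ _ h1x.ne' (Finset.mem_Icc.1 hi).2, hγ, div_pow, mul_pow]
          field_simp
      _ ≤ Real.exp (-(κ * x)) * (γ ^ i / i.factorial) := by
          rw [mul_comm]
          gcongr
  have hpartial : ∑ i ∈ Finset.Icc θ κ, γ ^ i / i.factorial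
      ≤ ∑' j : ℕ, γ ^ (θ + j) / (θ + j).factorial := by
    rw [← Finset.Ico_add_one_right_eq_Icc, Finset.sum_Ico_eq_sum_range]
    exact ((Real.summable_pow_div_factorial γ).comp_injective (add_right_injective θ)).sum_le_tsum
      _ (fun j _ => by positivity)
  have htail : Real.exp (γ - κ * x) * poissonTail γ θ
      = Real.exp (-(κ * x)) * ∑' j : ℕ, γ ^ (θ + j) / (θ + j).factorial := by
    rw [poissonTail, ← tsum_mul_left, ← tsum_mul_left]
    refine tsum_congr fun j => ?_
    rw [sub_eq_add_neg, Real.exp_add]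
    field_simp
    rw [← Real.exp_add, add_neg_cancel, Real.exp_zero, one_mul]
  calc binTail κ x θ ≤ ∑ i ∈ Finset.Icc θ κ, Real.exp (-(κ * x)) * (γ ^ i / i.factorial) :=
        Finset.sum_le_sum hterm
    _ ≤ Real.exp (γ - κ * x) * poissonTail γ θ := by
        rw [← Finset.mul_sum, htail]
        gcongr

noncomputable def mfRatio (κ θ : ℕ) (x : ℝ) : ℝ :=
  (1 - x) / x * binTail κ x θ

noncomputable def mfRatioSup (κ θ : ℕ) : ℝ :=
  sSup (mfRatio κ θ '' Ioc 0 1)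

lemma tendsto_mfRatio_div {γ : ℝ} (hγ : 0 < γ) (θ : ℕ) :
    Tendsto (fun κ : ℕ => mfRatio κ θ (γ / κ) / κ) atTop (𝓝 (poissonTail γ θ / γ)) := by
  have hfactor : Tendsto (fun κ : ℕ => (1 - γ / κ) / γ) atTop (𝓝 ((1 - 0) / γ)) :=
    (tendsto_const_nhds.sub (tendsto_const_div_atTop_nhds_zero_nat γ)).div_const γ
  rw [show poissonTail γ θ / γ = (1 - 0) / γ * poissonTail γ θ by ring]
  refine (hfactor.mul (tendsto_binTail_poissonTail γ θ)).congr' ?_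
  filter_upwards [eventually_ne_atTop 0] with κ hκ
  rw [mfRatio]
  field_simp

lemma mfRatio_le_inv (κ θ : ℕ) {x : ℝ} (hx0 : 0 < x) (hx1 : x ≤ 1) : mfRatio κ θ x ≤ x⁻¹ := by
  have h1x : 0 ≤ 1 - x := by linarith
  calc mfRatio κ θ x ≤ (1 - x) / x * 1 :=
        mul_le_mul_of_nonneg_left (binTail_le_one κ θ hx0.le hx1) (by positivity)
    _ ≤ x⁻¹ := by
        rw [mul_one, div_eq_mul_inv]
        exact mul_le_of_le_one_left (inv_nonneg.2 hx0.le) (by linarith)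

lemma mfRatio_le_mul_exp {κ θ : ℕ} (hθ : 1 ≤ θ) (hκ : 0 < κ) {x : ℝ} (hx0 : 0 < x) (hx1 : x < 1) :
    mfRatio κ θ x ≤ κ * (Real.exp ((κ * x) ^ 2 / (κ - κ * x)) * poissonRatioSup θ) := by
  set γ := κ * x / (1 - x) with hγ
  have h1x : 0 < 1 - x := by linarith
  have hκ' : (0 : ℝ) < κ := by exact_mod_cast hκ
  have hγ0 : 0 < γ := by positivity
  have hexponent : γ - κ * x = (κ * x) ^ 2 / (κ - κ * x) := by
    rw [hγ, show (κ : ℝ) - κ * x = κ * (1 - x) by ring]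
    field_simp
    ring
  calc mfRatio κ θ x ≤ (1 - x) / x * (Real.exp (γ - κ * x) * poissonTail γ θ) := by
        rw [mfRatio]
        gcongr
        exact binTail_le_exp_mul_poissonTail κ θ hx0.le hx1
    _ = κ * (Real.exp (γ - κ * x) * (poissonTail γ θ / γ)) := by
        rw [hγ]
        field_simp
    _ ≤ κ * (Real.exp ((κ * x) ^ 2 / (κ - κ * x)) * poissonRatioSup θ) := by
        rw [hexponent]
        gcongr
        exact poissonTail_div_le_poissonRatioSup hθ hγ0

lemma mfRatio_le_mul_max {κ θ : ℕ} (hθ : 1 ≤ θ) {b : ℝ} (hb : 0 < b) (hbκ : b < κ) {x : ℝ}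
    (hx : x ∈ Ioc 0 1) :
    mfRatio κ θ x ≤ κ * max b⁻¹ (Real.exp (b ^ 2 / (κ - b)) * poissonRatioSup θ) := by
  obtain ⟨hx0, hx1⟩ := hx
  have hκ : (0 : ℝ) < κ := hb.trans hbκ
  rcases le_or_gt b (κ * x) with hbx | hbx
  · calc mfRatio κ θ x ≤ x⁻¹ := mfRatio_le_inv κ θ hx0 hx1
      _ ≤ κ * b⁻¹ := by
          rw [inv_le_iff_one_le_mul₀ hx0, mul_right_comm, ← div_eq_mul_inv, one_le_div hb]
          exact hbx
      _ ≤ κ * max b⁻¹ (Real.exp (b ^ 2 / (κ - b)) * poissonRatioSup θ) := by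
          gcongr
          exact le_max_left _ _
  · have hxlt : x < 1 := by
      by_contra! h
      have : κ * x = κ := by rw [le_antisymm hx1 h, mul_one]
      linarith
    calc mfRatio κ θ x
        ≤ κ * (Real.exp ((κ * x) ^ 2 / (κ - κ * x)) * poissonRatioSup θ) :=
          mfRatio_le_mul_exp hθ (by exact_mod_cast hκ) hx0 hxlt
      _ ≤ κ * (Real.exp (b ^ 2 / (κ - b)) * poissonRatioSup θ) := by
          have := poissonRatioSup_pos hθ
          gcongr
      _ ≤ κ * max b⁻¹ (Real.exp (b ^ 2 / (κ - b)) * poissonRatioSup θ) := by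
          gcongr
          exact le_max_right _ _

lemma bddAbove_mfRatio {κ θ : ℕ} (hθ : 1 ≤ θ) (hκ : 1 < κ) : BddAbove (mfRatio κ θ '' Ioc 0 1) :=
  ⟨_, forall_mem_image.2 fun _ hx => mfRatio_le_mul_max hθ one_pos (by exact_mod_cast hκ) hx⟩

lemma mfRatioSup_div_le {κ θ : ℕ} (hθ : 1 ≤ θ) {b : ℝ} (hb : 0 < b) (hbκ : b < κ) :
    mfRatioSup κ θ / κ ≤ max b⁻¹ (Real.exp (b ^ 2 / (κ - b)) * poissonRatioSup θ) := by
  rw [div_le_iff₀' (hb.trans hbκ)]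
  exact csSup_le (image_nonempty.2 ⟨1, by norm_num⟩)
    (forall_mem_image.2 fun _ hx => mfRatio_le_mul_max hθ hb hbκ hx)

lemma mfRatioSup_pos {κ θ : ℕ} (hθ : 1 ≤ θ) (hκ : 1 < κ) (hθκ : θ ≤ κ) : 0 < mfRatioSup κ θ := by
  have hhalf : 0 < mfRatio κ θ (1 / 2) :=
    mul_pos (by norm_num) (binTail_pos hθκ (by norm_num) (by norm_num))
  exact hhalf.trans_le (le_csSup (bddAbove_mfRatio hθ hκ) (mem_image_of_mem _ (by norm_num)))

lemma tendsto_mfRatioSup_div {θ : ℕ} (hθ : 1 ≤ θ) :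
    Tendsto (fun κ : ℕ => mfRatioSup κ θ / κ) atTop (𝓝 (poissonRatioSup θ)) := by
  rw [tendsto_order]
  refine ⟨fun a ha => ?_, fun c hc => ?_⟩
  · obtain ⟨_, ⟨γ, hγ, rfl⟩, haγ⟩ := exists_lt_of_lt_csSup (image_nonempty.2 nonempty_Ioi) ha
    filter_upwards [(tendsto_mfRatio_div hγ θ).eventually (eventually_gt_nhds haγ),
      eventually_ge_atTop ⌈γ⌉₊, eventually_gt_atTop 1] with κ hlt hγκ hκ
    have hmem : γ / κ ∈ Ioc 0 1 :=
      ⟨div_pos hγ (Nat.cast_pos.2 (zero_lt_one.trans hκ)),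
        div_le_one_of_le₀ (Nat.ceil_le.1 hγκ) (Nat.cast_nonneg κ)⟩
    exact hlt.trans_le (div_le_div_of_nonneg_right
      (le_csSup (bddAbove_mfRatio hθ hκ) (mem_image_of_mem _ hmem)) (Nat.cast_nonneg κ))
  · set S := poissonRatioSup θ
    have hS := poissonRatioSup_pos hθ
    have hbound : Tendsto (fun κ : ℕ => max S⁻¹⁻¹ (Real.exp (S⁻¹ ^ 2 / (κ - S⁻¹)) * S)) atTop
        (𝓝 (max S⁻¹⁻¹ (Real.exp 0 * S))) := by
      refine tendsto_const_nhds.max (((Real.continuous_exp.tendsto 0).comp ?_).mul_const S)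
      exact tendsto_const_nhds.div_atTop
        (tendsto_atTop_add_const_right _ _ tendsto_natCast_atTop_atTop)
    rw [show max S⁻¹⁻¹ (Real.exp 0 * S) = S by rw [inv_inv, Real.exp_zero, one_mul, max_self]]
      at hbound
    filter_upwards [hbound.eventually (eventually_lt_nhds hc), eventually_gt_atTop ⌈S⁻¹⌉₊]
      with κ hlt hκ
    exact (mfRatioSup_div_le hθ (inv_pos.2 hS) (Nat.lt_of_ceil_lt hκ)).trans_lt hlt

lemma lambdaMF_eq_inv_mfRatioSup {κ θ : ℕ} (hθ : 1 ≤ θ) (hκ : 1 < κ) (hθκ : θ ≤ κ) :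
    lambdaMF κ θ = (mfRatioSup κ θ)⁻¹ := by
  have hHmf : Hmf κ θ = fun lam x => -1 + lam * mfRatio κ θ x := by
    funext lam x
    rw [Hmf, mfRatio, mul_assoc]
  rw [lambdaMF, hHmf]
  exact sSup_setOf_sSup_neg_one_add_mul_neg ⟨1, by norm_num⟩ (bddAbove_mfRatio hθ hκ)
    (mfRatioSup_pos hθ hκ hθκ)

/-- 0 < Φ_θ < ∞ and κ·λ_c^MF(κ,θ) → Φ_θ as κ → ∞. -/
theorem stmt7 (θ : ℕ) (hθ : 2 ≤ θ) :
    0 < Phi θ ∧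
    Tendsto (fun κ : ℕ => (κ : ℝ) * lambdaMF κ θ) atTop (nhds (Phi θ)) := by
  have hθ1 : 1 ≤ θ := by omega
  have hS := poissonRatioSup_pos hθ1
  rw [Phi_eq_inv_poissonRatioSup hθ1]
  refine ⟨inv_pos.2 hS, ((tendsto_mfRatioSup_div hθ1).inv₀ hS.ne').congr' ?_⟩
  filter_upwards [eventually_ge_atTop θ, eventually_gt_atTop 1] with κ hθκ hκ
  rw [lambdaMF_eq_inv_mfRatioSup hθ1 hκ hθκ, inv_div, div_eq_mul_inv]
end

section
/- (Mean-field model with threshold θ = 1.) For every integer κ ≥ 1: λ_c^MF(κ,1) = 1/κ, and for every real λ > 1/κ one has p_c^MF(κ,1,λ) = 0; that is, the mean-field transition at θ = 1 is continuous. -/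
lemma binTail_one (κ : ℕ) (x : ℝ) : binTail κ x 1 = 1 - (1 - x) ^ κ := by
  have h0 : binTail κ x 0 = 1 := by
    have hb := add_pow x (1 - x) κ
    simp only [add_sub_cancel, one_pow] at hb
    rw [binTail, show Finset.Icc 0 κ = Finset.range (κ + 1) by ext i; simp [Nat.lt_succ_iff]]
    rw [Finset.sum_congr rfl (fun i _ => by ring :
      ∀ i ∈ Finset.range (κ + 1), (κ.choose i : ℝ) * x ^ i * (1 - x) ^ (κ - i)
        = x ^ i * (1 - x) ^ (κ - i) * (κ.choose i : ℝ)), ← hb]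
  have h1 : binTail κ x 0 = (κ.choose 0 : ℝ) * x ^ 0 * (1 - x) ^ (κ - 0) + binTail κ x 1 := by
    rw [binTail, binTail, ← Finset.sum_erase_add _ _ (show 0 ∈ Finset.Icc 0 κ by simp)]
    rw [show (Finset.Icc 0 κ).erase 0 = Finset.Icc 1 κ by ext i; simp; omega]
    ring
  simp at h1
  linarith

lemma Hmf_eq_s9 (κ : ℕ) (lam x : ℝ) (hx : x ≠ 0) :
    Hmf κ 1 lam x = -1 + lam * ((1 - x) * ∑ i ∈ Finset.range κ, (1 - x) ^ i) := by
  have hg : x * ∑ i ∈ Finset.range κ, (1 - x) ^ i = 1 - (1 - x) ^ κ := by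
    have := geom_sum_mul (1 - x) κ
    nlinarith [this]
  rw [Hmf, binTail_one, ← hg]
  field_simp

lemma S_le (κ : ℕ) (x : ℝ) (hx0 : 0 ≤ x) (hx1 : x ≤ 1) :
    (1 - x) * ∑ i ∈ Finset.range κ, (1 - x) ^ i ≤ κ := by
  have h1 : ∑ i ∈ Finset.range κ, (1 - x) ^ i ≤ κ := by
    calc ∑ i ∈ Finset.range κ, (1 - x) ^ i ≤ ∑ i ∈ Finset.range κ, (1:ℝ) :=
          Finset.sum_le_sum (fun i _ => pow_le_one₀ (by linarith) (by linarith))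
      _ = κ := by simp
  have h2 : 0 ≤ ∑ i ∈ Finset.range κ, (1 - x) ^ i :=
    Finset.sum_nonneg (fun i _ => pow_nonneg (by linarith) _)
  nlinarith

lemma S_ge (κ : ℕ) (x : ℝ) (hx0 : 0 ≤ x) (hx1 : x ≤ 1) :
    (κ : ℝ) * (1 - x) ^ κ ≤ (1 - x) * ∑ i ∈ Finset.range κ, (1 - x) ^ i := by
  have : ∑ i ∈ Finset.range κ, (1 - x) ^ κ ≤ ∑ i ∈ Finset.range κ, (1 - x) ^ (i + 1) := by
    refine Finset.sum_le_sum (fun i hi => ?_)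
    exact pow_le_pow_of_le_one (by linarith) (by linarith) (by simp at hi; omega)
  have e : (1 - x) * ∑ i ∈ Finset.range κ, (1 - x) ^ i
      = ∑ i ∈ Finset.range κ, (1 - x) ^ (i + 1) := by
    rw [Finset.mul_sum]; exact Finset.sum_congr rfl (fun i _ => by ring)
  rw [e]
  simpa using this

lemma exH (κ : ℕ) (hκ : 1 ≤ κ) (lam ε : ℝ) (hlam : 1 / (κ : ℝ) < lam) (hε : 0 < ε) :
    ∃ x ∈ Set.Ioc (0:ℝ) 1, x ≤ ε ∧ 0 ≤ Hmf κ 1 lam x := by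
  have hκ0 : (0:ℝ) < κ := by exact_mod_cast hκ
  have hlam0 : 0 < lam := lt_trans (by positivity) hlam
  have h1 : 1 < lam * κ := by rw [div_lt_iff₀ hκ0] at hlam; linarith
  set c : ℝ := (lam * κ - 1) / (lam * κ ^ 2) with hc
  have hc0 : 0 < c := by apply div_pos <;> nlinarith
  have hcκ : c * (lam * κ ^ 2) = lam * κ - 1 := by
    exact div_mul_cancel₀ _ (by positivity)
  have hc1 : c < 1 / κ := by
    rw [div_lt_div_iff₀ (by positivity) hκ0]
    nlinarith
  set x := min ε c with hx
  have hx0 : 0 < x := lt_min hε hc0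
  have hxc : x ≤ c := min_le_right _ _
  have hx1 : x ≤ 1 := le_trans hxc (le_trans hc1.le (by rw [div_le_one hκ0]; exact_mod_cast hκ))
  refine ⟨x, ⟨hx0, hx1⟩, min_le_left _ _, ?_⟩
  rw [Hmf_eq_s9 κ lam x hx0.ne']
  have hS := S_ge κ x hx0.le hx1
  have hB : 1 + (κ:ℝ) * (-x) ≤ (1 + (-x)) ^ κ := one_add_mul_le_pow (by linarith) κ
  simp only [← sub_eq_add_neg, mul_neg] at hB
  have h2 : (1:ℝ) - κ * x ≤ (1 - x) ^ κ := by linarith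
  nlinarith [mul_le_mul_of_nonneg_left hS hlam0.le,
    mul_le_mul_of_nonneg_left h2 (by positivity : (0:ℝ) ≤ lam * κ),
    mul_le_mul_of_nonneg_left hxc (by positivity : (0:ℝ) ≤ lam * κ ^ 2)]

/-- Mean-field model with threshold θ = 1: λ_c^MF(κ,1) = 1/κ and
p_c^MF(κ,1,λ) = 0 for every λ > 1/κ. -/
theorem stmt9 (κ : ℕ) (hκ : 1 ≤ κ) :
    lambdaMF κ 1 = 1 / κ ∧
    ∀ lam : ℝ, 1 / (κ : ℝ) < lam → pcMF κ 1 lam = 0 := by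
  have hκ0 : (0:ℝ) < κ := by exact_mod_cast hκ
  -- image facts
  have himg_ne : ∀ lam : ℝ, ((fun x => Hmf κ 1 lam x) '' Set.Ioc 0 1).Nonempty :=
    fun lam => ⟨Hmf κ 1 lam 1, 1, by norm_num⟩
  have himg_bdd : ∀ lam : ℝ, 0 ≤ lam →
      ∀ y ∈ (fun x => Hmf κ 1 lam x) '' Set.Ioc 0 1, y ≤ -1 + lam * κ := by
    rintro lam hlam y ⟨x, ⟨hx0, hx1⟩, rfl⟩
    simp only
    rw [Hmf_eq_s9 κ lam x hx0.ne']
    have := S_le κ x hx0.le hx1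
    nlinarith
  have hmemA : ∀ lam : ℝ, 0 ≤ lam → lam * κ < 1 →
      lam ∈ {lam : ℝ | 0 ≤ lam ∧ sSup ((fun x => Hmf κ 1 lam x) '' Set.Ioc 0 1) < 0} := by
    intro lam h0 h1
    refine ⟨h0, lt_of_le_of_lt (csSup_le (himg_ne lam) (himg_bdd lam h0)) (by linarith)⟩
  have hubA : ∀ lam ∈ {lam : ℝ | 0 ≤ lam ∧ sSup ((fun x => Hmf κ 1 lam x) '' Set.Ioc 0 1) < 0},
      lam ≤ 1 / (κ : ℝ) := by
    rintro lam ⟨h0, hs⟩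
    by_contra h
    push_neg at h
    obtain ⟨x, hx, -, hH⟩ := exH κ hκ lam 1 h one_pos
    have : Hmf κ 1 lam x ≤ sSup ((fun x => Hmf κ 1 lam x) '' Set.Ioc 0 1) :=
      le_csSup ⟨-1 + lam * κ, fun y hy => himg_bdd lam h0 y hy⟩ ⟨x, hx, rfl⟩
    linarith
  constructor
  · apply le_antisymm
    · exact csSup_le ⟨0, hmemA 0 le_rfl (by norm_num)⟩ hubA
    · refine le_of_forall_pos_le_add (fun ε hε => ?_)
      set lam := max 0 (1 / (κ:ℝ) - ε) with hl
      have hl0 : 0 ≤ lam := le_max_left _ _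
      have hl1 : lam * κ < 1 := by
        have : lam < 1 / (κ:ℝ) := max_lt (by positivity) (by linarith)
        rw [← lt_div_iff₀ hκ0]
        exact this
      have := le_csSup ⟨1 / (κ:ℝ), hubA⟩ (hmemA lam hl0 hl1)
      have h2 : 1 / (κ:ℝ) - ε ≤ lam := le_max_right _ _
      unfold lambdaMF
      linarith
  · intro lam hlam
    have hne : {x ∈ Set.Ioc (0:ℝ) 1 | 0 ≤ Hmf κ 1 lam x}.Nonempty := by
      obtain ⟨x, hx, -, hH⟩ := exH κ hκ lam 1 hlam one_pos
      exact ⟨x, hx, hH⟩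
    have hbdd : BddBelow {x ∈ Set.Ioc (0:ℝ) 1 | 0 ≤ Hmf κ 1 lam x} :=
      ⟨0, fun x hx => hx.1.1.le⟩
    apply le_antisymm
    · refine le_of_forall_pos_le_add (fun ε hε => ?_)
      obtain ⟨x, hx, hxε, hH⟩ := exH κ hκ lam ε hlam hε
      have := csInf_le hbdd (show x ∈ _ from ⟨hx, hH⟩)
      unfold pcMF
      linarith
    · exact le_csInf hne (fun x hx => hx.1.1.le)
end
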